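/- Missing information principle, fourth order (Lemma 7 of the paper, order 4, finite mixture form): if p is four times differentiable in θ, then for every θ ∈ U, (d⁴/dθ⁴) log P(θ) = E_θ[ℓ₄] + 4 E_θ^c[ℓ₃ ℓ₁] + 3 E_θ^c[ℓ₂²] + 6 E_θ^c[ℓ₂ ℓ₁²] + E_θ^c[ℓ₁⁴] − 3 (E_θ^c[ℓ₁²])², where ℓ_j abbreviates ℓ_j(θ,·). -/

import Mathlib

noncomputable section

/-- `P(θ) = Σ_x p(θ,x)`. -/
def mixP {𝒳 : Type*} [Fintype 𝒳] (p : ℝ → 𝒳 → ℝ) (θ : ℝ) : ℝ := ∑ x, p θ x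

/-- Posterior weights `w(θ,x) = p(θ,x)/P(θ)`. -/
def mixW {𝒳 : Type*} [Fintype 𝒳] (p : ℝ → 𝒳 → ℝ) (θ : ℝ) (x : 𝒳) : ℝ :=
  p θ x / mixP p θ

/-- Conditional expectation `E_θ[g] = Σ_x w(θ,x) g(x)`. -/
def mixE {𝒳 : Type*} [Fintype 𝒳] (p : ℝ → 𝒳 → ℝ) (θ : ℝ) (g : 𝒳 → ℝ) : ℝ :=
  ∑ x, mixW p θ x * g x

/-- Central conditional moments `E_θ^c[g₁⋯g_r] = Σ_x w(θ,x) ∏ᵢ (gᵢ(x) − E_θ[gᵢ])`. -/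
def mixEc {𝒳 : Type*} [Fintype 𝒳] (p : ℝ → 𝒳 → ℝ) (θ : ℝ) (gs : List (𝒳 → ℝ)) : ℝ :=
  ∑ x, mixW p θ x * (gs.map fun g => g x - mixE p θ g).prod

/-- `ℓ_j(θ,x) = (∂/∂θ)^j log p(θ,x)`. -/
def mixL {𝒳 : Type*} [Fintype 𝒳] (p : ℝ → 𝒳 → ℝ) (j : ℕ) (θ : ℝ) (x : 𝒳) : ℝ :=
  iteratedDeriv j (fun θ' => Real.log (p θ' x)) θ

end

/-!
Write `m_k = f⁽ᵏ⁾ / f` (`derivMoment f k`). Since `m_k' = m_(k+1) - m_k m_1`, differentiating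
`(log f)' = m_1` three more times expresses the derivatives of `log f` through the `m_k` by the
moment-to-cumulant formulas; conversely `m_k` is the complete Bell polynomial in the derivatives
of `log f`. For the mixture, `P⁽ᵏ⁾ / P = E_θ[p⁽ᵏ⁾ / p]`, so `(log P)⁗` is the fourth cumulant of
the posterior means of the Bell polynomials in the `ℓ_j`; once the central moments are expanded
into raw ones, the claim is a polynomial identity.
-/

open Set

noncomputable def derivMoment (f : ℝ → ℝ) (k : ℕ) (t : ℝ) : ℝ :=
  iteratedDeriv k f t / f t

theorem DifferentiableAt.hasDerivAt_iteratedDeriv {f : ℝ → ℝ} {j : ℕ} {t : ℝ}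
    (h : DifferentiableAt ℝ (iteratedDeriv j f) t) :
    HasDerivAt (iteratedDeriv j f) (iteratedDeriv (j + 1) f t) t := by
  rw [iteratedDeriv_succ]
  exact h.hasDerivAt

theorem Set.EqOn.iteratedDeriv_succ {g G G' : ℝ → ℝ} {U : Set ℝ} {k : ℕ} (hU : IsOpen U)
    (h : EqOn (iteratedDeriv k g) G U) (hG : ∀ t ∈ U, HasDerivAt G (G' t) t) :
    EqOn (iteratedDeriv (k + 1) g) G' U := fun t ht => by
  rw [_root_.iteratedDeriv_succ, (Filter.eventuallyEq_of_mem (hU.mem_nhds ht) h).deriv_eq,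
    (hG t ht).deriv]

theorem hasDerivAt_derivMoment {f : ℝ → ℝ} {j : ℕ} {t : ℝ} (hf : DifferentiableAt ℝ f t)
    (hj : DifferentiableAt ℝ (iteratedDeriv j f) t) (ht : f t ≠ 0) :
    HasDerivAt (derivMoment f j)
      (derivMoment f (j + 1) t - derivMoment f j t * derivMoment f 1 t) t := by
  have hf' : HasDerivAt f (iteratedDeriv 1 f t) t := by
    simpa only [iteratedDeriv_one] using hf.hasDerivAt
  refine (hj.hasDerivAt_iteratedDeriv.div hf' ht).congr_deriv ?_
  simp only [derivMoment]
  field_simp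

theorem iteratedDeriv_log_eq_cumulant {f : ℝ → ℝ} {U : Set ℝ} (hU : IsOpen U)
    (hf : ∀ t ∈ U, f t ≠ 0) (hdiff : ∀ j < 4, DifferentiableOn ℝ (iteratedDeriv j f) U)
    {θ : ℝ} (hθ : θ ∈ U) :
    iteratedDeriv 1 (fun t => Real.log (f t)) θ = derivMoment f 1 θ ∧
    iteratedDeriv 2 (fun t => Real.log (f t)) θ = derivMoment f 2 θ - derivMoment f 1 θ ^ 2 ∧
    iteratedDeriv 3 (fun t => Real.log (f t)) θ = derivMoment f 3 θ
      - 3 * derivMoment f 2 θ * derivMoment f 1 θ + 2 * derivMoment f 1 θ ^ 3 ∧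
    iteratedDeriv 4 (fun t => Real.log (f t)) θ = derivMoment f 4 θ
      - 4 * derivMoment f 3 θ * derivMoment f 1 θ - 3 * derivMoment f 2 θ ^ 2
      + 12 * derivMoment f 2 θ * derivMoment f 1 θ ^ 2 - 6 * derivMoment f 1 θ ^ 4 := by
  have hdiffAt : ∀ j < 4, ∀ t ∈ U, DifferentiableAt ℝ (iteratedDeriv j f) t :=
    fun j hj t ht => (hdiff j hj).differentiableAt (hU.mem_nhds ht)
  have hm : ∀ j < 4, ∀ t ∈ U, HasDerivAt (derivMoment f j)
      (derivMoment f (j + 1) t - derivMoment f j t * derivMoment f 1 t) t :=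
    fun j hj t ht => hasDerivAt_derivMoment (by simpa using hdiffAt 0 (by norm_num) t ht)
      (hdiffAt j hj t ht) (hf t ht)
  have e1 : EqOn (iteratedDeriv 1 fun t => Real.log (f t)) (derivMoment f 1) U := by
    refine EqOn.iteratedDeriv_succ (k := 0) (G := fun t => Real.log (f t)) hU (by simp [EqOn])
      fun t ht => ?_
    simpa [derivMoment] using
      ((hdiffAt 0 (by norm_num) t ht).hasDerivAt_iteratedDeriv.log (hf t ht))
  have e2 := e1.iteratedDeriv_succ hU (G' := fun t => derivMoment f 2 t - derivMoment f 1 t ^ 2)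
    fun t ht => (hm 1 (by norm_num) t ht).congr_deriv (by ring)
  have e3 := e2.iteratedDeriv_succ hU (G' := fun t => derivMoment f 3 t
      - 3 * derivMoment f 2 t * derivMoment f 1 t + 2 * derivMoment f 1 t ^ 3)
    fun t ht => ((hm 2 (by norm_num) t ht).sub ((hm 1 (by norm_num) t ht).pow 2)).congr_deriv
      (by ring)
  have e4 := e3.iteratedDeriv_succ hU (G' := fun t => derivMoment f 4 t
      - 4 * derivMoment f 3 t * derivMoment f 1 t - 3 * derivMoment f 2 t ^ 2
      + 12 * derivMoment f 2 t * derivMoment f 1 t ^ 2 - 6 * derivMoment f 1 t ^ 4)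
    fun t ht => (((hm 3 (by norm_num) t ht).fun_sub
      (((hm 2 (by norm_num) t ht).const_mul 3).fun_mul (hm 1 (by norm_num) t ht))).fun_add
      (((hm 1 (by norm_num) t ht).fun_pow 3).const_mul 2)).congr_deriv (by ring)
  exact ⟨e1 hθ, e2 hθ, e3 hθ, e4 hθ⟩

theorem derivMoment_eq_bell {f : ℝ → ℝ} {U : Set ℝ} (hU : IsOpen U)
    (hf : ∀ t ∈ U, f t ≠ 0) (hdiff : ∀ j < 4, DifferentiableOn ℝ (iteratedDeriv j f) U)
    {θ : ℝ} (hθ : θ ∈ U) :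
    derivMoment f 1 θ = iteratedDeriv 1 (fun t => Real.log (f t)) θ ∧
    derivMoment f 2 θ = iteratedDeriv 2 (fun t => Real.log (f t)) θ
      + iteratedDeriv 1 (fun t => Real.log (f t)) θ * iteratedDeriv 1 (fun t => Real.log (f t)) θ ∧
    derivMoment f 3 θ = iteratedDeriv 3 (fun t => Real.log (f t)) θ
      + 3 * (iteratedDeriv 2 (fun t => Real.log (f t)) θ
        * iteratedDeriv 1 (fun t => Real.log (f t)) θ)
      + iteratedDeriv 1 (fun t => Real.log (f t)) θ * iteratedDeriv 1 (fun t => Real.log (f t)) θ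
        * iteratedDeriv 1 (fun t => Real.log (f t)) θ ∧
    derivMoment f 4 θ = iteratedDeriv 4 (fun t => Real.log (f t)) θ
      + 4 * (iteratedDeriv 3 (fun t => Real.log (f t)) θ
        * iteratedDeriv 1 (fun t => Real.log (f t)) θ)
      + 3 * (iteratedDeriv 2 (fun t => Real.log (f t)) θ
        * iteratedDeriv 2 (fun t => Real.log (f t)) θ)
      + 6 * (iteratedDeriv 2 (fun t => Real.log (f t)) θ
        * iteratedDeriv 1 (fun t => Real.log (f t)) θ * iteratedDeriv 1 (fun t => Real.log (f t)) θ)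
      + iteratedDeriv 1 (fun t => Real.log (f t)) θ * iteratedDeriv 1 (fun t => Real.log (f t)) θ
        * iteratedDeriv 1 (fun t => Real.log (f t)) θ
        * iteratedDeriv 1 (fun t => Real.log (f t)) θ := by
  obtain ⟨h1, h2, h3, h4⟩ := iteratedDeriv_log_eq_cumulant hU hf hdiff hθ
  rw [h1, h2, h3, h4]
  refine ⟨rfl, ?_, ?_, ?_⟩ <;> ring

section Mixture

variable {𝒳 : Type*} [Fintype 𝒳] {p : ℝ → 𝒳 → ℝ} {θ : ℝ}

theorem mixE_add (f g : 𝒳 → ℝ) : mixE p θ (fun x => f x + g x) = mixE p θ f + mixE p θ g := by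
  simp only [mixE, mul_add, Finset.sum_add_distrib]

theorem mixE_sub (f g : 𝒳 → ℝ) : mixE p θ (fun x => f x - g x) = mixE p θ f - mixE p θ g := by
  simp only [mixE, mul_sub, Finset.sum_sub_distrib]

theorem mixE_const_mul (c : ℝ) (f : 𝒳 → ℝ) : mixE p θ (fun x => c * f x) = c * mixE p θ f := by
  simp only [mixE, Finset.mul_sum]
  exact Finset.sum_congr rfl fun x _ => by ring

theorem mixE_const (hP : mixP p θ ≠ 0) (c : ℝ) : mixE p θ (fun _ => c) = c := by
  simp only [mixE, mixW, ← Finset.sum_mul, ← Finset.sum_div]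
  rw [show ∑ x, p θ x = mixP p θ from rfl, div_self hP, one_mul]

theorem mixEc_eq_mixE (gs : List (𝒳 → ℝ)) :
    mixEc p θ gs = mixE p θ (fun x => (gs.map fun g => g x - mixE p θ g).prod) := rfl

theorem mixEc_pair (hP : mixP p θ ≠ 0) (g h : 𝒳 → ℝ) :
    mixEc p θ [g, h] = mixE p θ (fun x => g x * h x) - mixE p θ g * mixE p θ h := by
  set G := mixE p θ g
  set H := mixE p θ h
  calc mixEc p θ [g, h]
      = mixE p θ (fun x => g x * h x - G * h x - H * g x + G * H) := by
        rw [mixEc_eq_mixE]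
        congr 1
        funext x
        simp only [List.map_cons, List.map_nil, List.prod_cons, List.prod_nil]
        ring
    _ = _ := by
        simp only [mixE_add, mixE_sub, mixE_const_mul, mixE_const hP]
        ring

theorem mixEc_triple (hP : mixP p θ ≠ 0) (g h k : 𝒳 → ℝ) :
    mixEc p θ [g, h, k] = mixE p θ (fun x => g x * h x * k x)
      - mixE p θ g * mixE p θ (fun x => h x * k x) - mixE p θ h * mixE p θ (fun x => g x * k x)
      - mixE p θ k * mixE p θ (fun x => g x * h x)
      + 2 * mixE p θ g * mixE p θ h * mixE p θ k := by
  set G := mixE p θ g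
  set H := mixE p θ h
  set K := mixE p θ k
  calc mixEc p θ [g, h, k]
      = mixE p θ (fun x => g x * h x * k x - G * (h x * k x) - H * (g x * k x) - K * (g x * h x)
          + G * H * k x + G * K * h x + H * K * g x - G * H * K) := by
        rw [mixEc_eq_mixE]
        congr 1
        funext x
        simp only [List.map_cons, List.map_nil, List.prod_cons, List.prod_nil]
        ring
    _ = _ := by
        simp only [mixE_add, mixE_sub, mixE_const_mul, mixE_const hP]
        ring

theorem mixEc_quadruple_self (hP : mixP p θ ≠ 0) (g : 𝒳 → ℝ) :
    mixEc p θ [g, g, g, g] = mixE p θ (fun x => g x * g x * g x * g x)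
      - 4 * mixE p θ g * mixE p θ (fun x => g x * g x * g x)
      + 6 * mixE p θ g ^ 2 * mixE p θ (fun x => g x * g x) - 3 * mixE p θ g ^ 4 := by
  set G := mixE p θ g
  calc mixEc p θ [g, g, g, g]
      = mixE p θ (fun x => g x * g x * g x * g x - 4 * G * (g x * g x * g x)
          + 6 * G ^ 2 * (g x * g x) - 4 * G ^ 3 * g x + G ^ 4) := by
        rw [mixEc_eq_mixE]
        congr 1
        funext x
        simp only [List.map_cons, List.map_nil, List.prod_cons, List.prod_nil]
        ring
    _ = _ := by
        simp only [mixE_add, mixE_sub, mixE_const_mul, mixE_const hP]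
        ring

theorem eqOn_iteratedDeriv_mixP {U : Set ℝ} (hU : IsOpen U) {n : ℕ}
    (hdiff : ∀ x, ∀ j < n, DifferentiableOn ℝ (iteratedDeriv j (fun θ => p θ x)) U) :
    ∀ j ≤ n, EqOn (iteratedDeriv j (mixP p)) (fun t => ∑ x, iteratedDeriv j (fun θ => p θ x) t) U
  | 0, _ => by simp [EqOn, mixP]
  | j + 1, hj => (eqOn_iteratedDeriv_mixP hU hdiff j (by omega)).iteratedDeriv_succ hU
      fun t ht => HasDerivAt.fun_sum fun x _ =>
        ((hdiff x j hj).differentiableAt (hU.mem_nhds ht)).hasDerivAt_iteratedDeriv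

theorem differentiableOn_iteratedDeriv_mixP {U : Set ℝ} (hU : IsOpen U) {n : ℕ}
    (hdiff : ∀ x, ∀ j < n, DifferentiableOn ℝ (iteratedDeriv j (fun θ => p θ x)) U) :
    ∀ j < n, DifferentiableOn ℝ (iteratedDeriv j (mixP p)) U := fun j hj =>
  (DifferentiableOn.fun_sum fun x _ => hdiff x j hj).congr
    (eqOn_iteratedDeriv_mixP hU hdiff j hj.le)

theorem derivMoment_mixP {k : ℕ}
    (hk : iteratedDeriv k (mixP p) θ = ∑ x, iteratedDeriv k (fun t => p t x) θ)
    (hp : ∀ x, p θ x ≠ 0) :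
    derivMoment (mixP p) k θ = mixE p θ (fun x => derivMoment (fun t => p t x) k θ) := by
  simp only [derivMoment, mixE, mixW, hk, Finset.sum_div]
  exact Finset.sum_congr rfl fun x _ => by field_simp [hp x]

end Mixture

/-- Missing information principle, fourth order (finite mixture form): if `p` is four times
differentiable in `θ`, then for every `θ ∈ U`,
`(d⁴/dθ⁴) log P(θ) = E_θ[ℓ₄] + 4E_θ^c[ℓ₃ℓ₁] + 3E_θ^c[ℓ₂²] + 6E_θ^c[ℓ₂ℓ₁²] + E_θ^c[ℓ₁⁴]
  − 3(E_θ^c[ℓ₁²])²`. -/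
theorem stmt4 {𝒳 : Type*} [Fintype 𝒳] [Nonempty 𝒳]
    (U : Set ℝ) (hU : IsOpen U) (p : ℝ → 𝒳 → ℝ)
    (hpos : ∀ θ ∈ U, ∀ x, 0 < p θ x)
    (hdiff : ∀ x, ∀ j < 4, DifferentiableOn ℝ (iteratedDeriv j (fun θ => p θ x)) U) :
    ∀ θ ∈ U,
      iteratedDeriv 4 (fun θ' => Real.log (mixP p θ')) θ
        = mixE p θ (mixL p 4 θ)
          + 4 * mixEc p θ [mixL p 3 θ, mixL p 1 θ]
          + 3 * mixEc p θ [mixL p 2 θ, mixL p 2 θ]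
          + 6 * mixEc p θ [mixL p 2 θ, mixL p 1 θ, mixL p 1 θ]
          + mixEc p θ [mixL p 1 θ, mixL p 1 θ, mixL p 1 θ, mixL p 1 θ]
          - 3 * (mixEc p θ [mixL p 1 θ, mixL p 1 θ]) ^ 2 := by
  intro θ hθ
  have hP : ∀ t ∈ U, mixP p t ≠ 0 := fun t ht =>
    (Finset.sum_pos (fun x _ => hpos t ht x) Finset.univ_nonempty).ne'
  obtain ⟨-, -, -, hL4⟩ := iteratedDeriv_log_eq_cumulant hU hP
    (differentiableOn_iteratedDeriv_mixP hU hdiff) hθ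
  have hM : ∀ k ≤ 4, derivMoment (mixP p) k θ
      = mixE p θ (fun x => derivMoment (fun t => p t x) k θ) := fun k hk =>
    derivMoment_mixP (eqOn_iteratedDeriv_mixP hU hdiff k hk hθ) fun x => (hpos θ hθ x).ne'
  have hℓ := fun x => derivMoment_eq_bell hU (fun t ht => (hpos t ht x).ne') (hdiff x) hθ
  simp only [forall_and] at hℓ
  obtain ⟨h1, h2, h3, h4⟩ := hℓ
  rw [hL4, hM 1 (by norm_num), hM 2 (by norm_num), hM 3 (by norm_num), hM 4 (by norm_num)]
  simp only [h1, h2, h3, h4, ← mixL.eq_1, mixE_add, mixE_const_mul, mixEc_pair (hP θ hθ),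
    mixEc_triple (hP θ hθ), mixEc_quadruple_self (hP θ hθ)]
  ring
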